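/- arXiv:2211.01295 — 3 statements merged into one kernel-verified Lean document; each statement's English description precedes it below -/
import Mathlib

section
/- Assume each D i j is a finite nonempty subset of ℝ and O ∩ 𝒟 ≠ ∅, and let M̲, M̄ be the minimum and maximum of O ∩ 𝒟 in the lexicographic order of row-wise vectorizations. Let i' ∈ Fin p and j' ∈ Fin q with (i' : ℕ) ≤ i_{j'}. Then for every v ∈ D i' j' with M̲ i' j' ≤ v ≤ M̄ i' j', there exists X ∈ O ∩ 𝒟 with X i' j' = v. -/
/-- Lexicographic order `u ⪰ v` on `Fin p → ℝ`. -/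
def lexGe {p : ℕ} (u v : Fin p → ℝ) : Prop :=
  u = v ∨ ∃ k : Fin p, (∀ i : Fin p, i < k → u i = v i) ∧ v k < u k

/-- The set of `p × q` matrices whose columns are lexicographically
non-increasing. -/
def Omat (p q : ℕ) : Set (Fin p → Fin q → ℝ) :=
  {X | ∀ j j' : Fin q, j ≤ j' → lexGe (fun i => X i j) (fun i => X i j')}

/-- The set of matrices respecting the entrywise domains `D`. -/
def Dmat {p q : ℕ} (D : Fin p → Fin q → Set ℝ) : Set (Fin p → Fin q → ℝ) :=
  {X | ∀ i j, X i j ∈ D i j}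

/-- Row-wise vectorization: `vec X (q·i + j) = X i j`. -/
def vec {p q : ℕ} (X : Fin p → Fin q → ℝ) : Fin (p * q) → ℝ :=
  fun k => X (finProdFinEquiv.symm k).1 (finProdFinEquiv.symm k).2

lemma lexGe_trans {p : ℕ} {u v w : Fin p → ℝ} (h1 : lexGe u v) (h2 : lexGe v w) :
    lexGe u w := by
  rcases h1 with rfl | ⟨k1, he1, hl1⟩
  · exact h2
  rcases h2 with rfl | ⟨k2, he2, hl2⟩
  · exact Or.inr ⟨k1, he1, hl1⟩
  rcases lt_trichotomy k1 k2 with h | h | h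
  · exact Or.inr ⟨k1, fun i hi => (he1 i hi).trans (he2 i (hi.trans h)), by
      rw [← he2 k1 h]; exact hl1⟩
  · subst h
    exact Or.inr ⟨k1, fun i hi => (he1 i hi).trans (he2 i hi), hl2.trans hl1⟩
  · exact Or.inr ⟨k2, fun i hi => (he1 i (hi.trans h)).trans (he2 i hi), by
      rw [he1 k2 h]; exact hl2⟩

theorem stmt7 (p q : ℕ) (D : Fin p → Fin q → Set ℝ)
    (hDfin : ∀ i j, (D i j).Finite) (hDne : ∀ i j, (D i j).Nonempty)
    (hOD : (Omat p q ∩ Dmat D).Nonempty)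
    (Mlo Mhi : Fin p → Fin q → ℝ)
    -- `Mlo` is the lexicographic minimum of `O ∩ 𝒟` (w.r.t. vectorizations)
    (hMlo : Mlo ∈ Omat p q ∩ Dmat D ∧
      ∀ X ∈ Omat p q ∩ Dmat D, lexGe (vec X) (vec Mlo))
    -- `Mhi` is the lexicographic maximum of `O ∩ 𝒟`
    (hMhi : Mhi ∈ Omat p q ∩ Dmat D ∧
      ∀ X ∈ Omat p q ∩ Dmat D, lexGe (vec Mhi) (vec X))
    -- `iIdx j` is the least `i < p` with `Mlo i j ≠ Mhi i j`, and `p` if none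
    (iIdx : Fin q → ℕ)
    (hiIdx : ∀ j : Fin q,
      iIdx j = sInf ({i : ℕ | ∃ h : i < p, Mlo ⟨i, h⟩ j ≠ Mhi ⟨i, h⟩ j} ∪ {p}))
    (Dhat : Fin p → Fin q → Set ℝ)
    (i' : Fin p) (j' : Fin q) (hij : (i' : ℕ) ≤ iIdx j') :
    ∀ v ∈ D i' j', Mlo i' j' ≤ v → v ≤ Mhi i' j' →
      ∃ X ∈ Omat p q ∩ Dmat D, X i' j' = v := by
  intro v hv hlov hvhi
  rcases eq_or_lt_of_le hlov with heq | hlo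
  · exact ⟨Mlo, hMlo.1, heq⟩
  rcases eq_or_lt_of_le hvhi with heq | hhi
  · exact ⟨Mhi, hMhi.1, heq.symm⟩
  -- common part of the two columns above row i'
  have hcommon : ∀ i : Fin p, i < i' → Mlo i j' = Mhi i j' := by
    intro i hi
    have h1 : (i : ℕ) < iIdx j' := lt_of_lt_of_le hi hij
    rw [hiIdx j'] at h1
    have h2 := Nat.notMem_of_lt_sInf h1
    simp only [Set.mem_union, Set.mem_setOf_eq, Set.mem_singleton_iff, not_or,
      not_exists, not_not] at h2
    have := h2.1 i.isLt
    simpa using this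
  -- the modified matrix
  set X : Fin p → Fin q → ℝ := fun i j =>
    if j = j' then (if i < i' then Mhi i j' else if i = i' then v else Mlo i j')
    else if j < j' then Mhi i j else Mlo i j with hX
  have hXj' : ∀ i : Fin p,
      X i j' = if i < i' then Mhi i j' else if i = i' then v else Mlo i j' := by
    intro i; simp [hX]
  have hXlt : ∀ (j : Fin q), j < j' → ∀ i : Fin p, X i j = Mhi i j := by
    intro j hj i; simp [hX, ne_of_lt hj, hj]
  have hXgt : ∀ (j : Fin q), j' < j → ∀ i : Fin p, X i j = Mlo i j := by
    intro j hj i; simp [hX, (ne_of_lt hj).symm, not_lt_of_gt hj]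
  have hXi'j' : X i' j' = v := by
    rw [hXj' i']; simp
  -- key lexicographic comparisons for the modified column
  have key1 : lexGe (fun i => Mhi i j') (fun i => X i j') := by
    refine Or.inr ⟨i', fun i hi => ?_, ?_⟩
    · show Mhi i j' = X i j'
      rw [hXj' i, if_pos hi]
    · simpa [hXi'j'] using hhi
  have key2 : lexGe (fun i => X i j') (fun i => Mlo i j') := by
    refine Or.inr ⟨i', fun i hi => ?_, ?_⟩
    · show X i j' = Mlo i j'
      rw [hXj' i, if_pos hi]; exact (hcommon i hi).symm
    · simpa [hXi'j'] using hlo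
  refine ⟨X, ⟨?_, ?_⟩, hXi'j'⟩
  · -- X ∈ Omat
    intro a b hab
    rcases lt_trichotomy b j' with hb | hb | hb
    · have ha : a < j' := lt_of_le_of_lt hab hb
      have e1 : (fun i => X i a) = fun i => Mhi i a := funext fun i => hXlt a ha i
      have e2 : (fun i => X i b) = fun i => Mhi i b := funext fun i => hXlt b hb i
      rw [e1, e2]; exact hMhi.1.1 a b hab
    · subst hb
      rcases eq_or_lt_of_le hab with rfl | ha
      · exact Or.inl rfl
      · have e1 : (fun i => X i a) = fun i => Mhi i a := funext fun i => hXlt a ha i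
        rw [e1]
        exact lexGe_trans (hMhi.1.1 a b (le_of_lt ha)) key1
    · have e2 : (fun i => X i b) = fun i => Mlo i b := funext fun i => hXgt b hb i
      rw [e2]
      have tail : lexGe (fun i => X i j') (fun i => Mlo i b) :=
        lexGe_trans key2 (hMlo.1.1 j' b (le_of_lt hb))
      rcases lt_trichotomy a j' with ha | ha | ha
      · have e1 : (fun i => X i a) = fun i => Mhi i a := funext fun i => hXlt a ha i
        rw [e1]
        exact lexGe_trans (hMhi.1.1 a j' (le_of_lt ha)) (lexGe_trans key1 tail)
      · subst ha; exact tail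
      · have e1 : (fun i => X i a) = fun i => Mlo i a := funext fun i => hXgt a ha i
        rw [e1]
        have hab' : j' ≤ a := le_of_lt ha
        have hab'' : a ≤ b := hab
        have e2' : lexGe (fun i => Mlo i a) (fun i => Mlo i b) := hMlo.1.1 a b hab
        exact e2'
  · -- X ∈ Dmat
    intro i j
    by_cases hj : j = j'
    · subst hj
      rw [hXj' i]
      by_cases h1 : i < i'
      · rw [if_pos h1]; exact hMhi.1.2 i j
      · rw [if_neg h1]
        by_cases h2 : i = i'
        · subst h2; rw [if_pos rfl]; exact hv
        · rw [if_neg h2]; exact hMlo.1.2 i j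
    · rcases lt_or_gt_of_ne hj with h | h
      · rw [hXlt j h i]; exact hMhi.1.2 i j
      · rw [hXgt j h i]; exact hMlo.1.2 i j
end

section
/- Assume each D i j is a finite nonempty subset of ℝ and O ∩ 𝒟 ≠ ∅, and let M̲, M̄ be the minimum and maximum of O ∩ 𝒟 in the lexicographic order of row-wise vectorizations. Let i' ∈ Fin p and j' ∈ Fin q with (i' : ℕ) ≤ i_{j'}. Then every X ∈ O ∩ 𝒟 satisfies M̲ i' j' ≤ X i' j' ≤ M̄ i' j'. -/
/-!
The columnwise lexicographic meet of a feasible `X` with the minimum `M̲` is again feasible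
(antitone sequences are closed under meets, and every column is a column of `X` or of `M̲`), and
its vectorization is at most that of `M̲`; minimality forces it to be `M̲`, so each column of `M̲`
is lexicographically below the corresponding column of `X`. Dually (with joins) each column of `M̄`
lies above that of `X`. As the `j'`-th columns of `M̲` and `M̄` agree strictly above row `i_{j'}`,
any column squeezed between them agrees with them there, and then lies between them in row `i'`.
-/

open Function

section Extremal

variable {β γ : Type*} [Preorder γ] {f : β → γ} {S : Set β} {M X : β}

theorem StrictMono.le_of_isMinOn_of_inf_mem [SemilatticeInf β] (hf : StrictMono f)
    (hmin : IsMinOn f S M) (hinf : X ⊓ M ∈ S) : M ≤ X := by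
  by_contra h
  have hlt : X ⊓ M < M := inf_le_right.lt_of_ne fun e => h (e ▸ inf_le_left)
  exact (hf hlt).not_ge (isMinOn_iff.mp hmin _ hinf)

theorem StrictMono.le_of_isMaxOn_of_sup_mem [SemilatticeSup β] (hf : StrictMono f)
    (hmax : IsMaxOn f S M) (hsup : X ⊔ M ∈ S) : X ≤ M :=
  StrictMono.le_of_isMinOn_of_inf_mem (β := βᵒᵈ) (γ := γᵒᵈ) hf.dual hmax hsup

end Extremal

section PiLex

variable {ι α : Type*} [LinearOrder ι] [LinearOrder α] {a x b : ι → α} {i : ι}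

theorem Pi.eq_of_toLex_le_of_le_of_eq [WellFoundedLT ι] (hax : toLex a ≤ toLex x)
    (hxb : toLex x ≤ toLex b) (hab : ∀ s < i, a s = b s) : ∀ s < i, a s = x s := by
  intro s
  induction s using WellFoundedLT.induction with
  | _ s ih =>
    intro hs
    have hbelow : ∀ t < s, a t = x t := fun t ht => ih t ht (ht.trans hs)
    refine le_antisymm (Pi.apply_le_of_toLex hax hbelow) ?_
    rw [hab s hs]
    exact Pi.apply_le_of_toLex hxb fun t ht => (hbelow t ht).symm.trans (hab t (ht.trans hs))

theorem Pi.apply_mem_Icc_of_toLex_le_of_le [WellFoundedLT ι] (hax : toLex a ≤ toLex x)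
    (hxb : toLex x ≤ toLex b) (hab : ∀ s < i, a s = b s) : x i ∈ Set.Icc (a i) (b i) :=
  have hax' := Pi.eq_of_toLex_le_of_le_of_eq hax hxb hab
  ⟨Pi.apply_le_of_toLex hax hax',
    Pi.apply_le_of_toLex hxb fun s hs => (hax' s hs).symm.trans (hab s hs)⟩

end PiLex

theorem lexGe_iff {n : ℕ} {u v : Fin n → ℝ} : lexGe u v ↔ toLex v ≤ toLex u := by
  rw [le_iff_lt_or_eq, or_comm, toLex_inj, eq_comm]
  exact or_congr_right ⟨fun ⟨k, h, hk⟩ => ⟨k, fun i hi => (h i hi).symm, hk⟩,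
    fun ⟨k, h, hk⟩ => ⟨k, fun i hi => (h i hi).symm, hk⟩⟩

theorem finProdFinEquiv_lt_of_fst_lt {m n : ℕ} {i i₀ : Fin m} (j : Fin n) (h : i₀ < i) :
    finProdFinEquiv (i₀, j) < finProdFinEquiv (i, j) := by
  rw [Fin.lt_def, finProdFinEquiv_apply_val, finProdFinEquiv_apply_val]
  have := j.pos
  gcongr
  exact h

section Columns

variable {p q : ℕ} {D : Fin p → Fin q → Set ℝ} {X Y : Fin p → Fin q → ℝ}

def cols (X : Fin p → Fin q → ℝ) : Fin q → Lex (Fin p → ℝ) := fun j => toLex fun i => X i j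

@[simp]
theorem cols_apply (X : Fin p → Fin q → ℝ) (i : Fin p) (j : Fin q) : cols X j i = X i j := rfl

def ofCols (C : Fin q → Lex (Fin p → ℝ)) : Fin p → Fin q → ℝ := fun i j => ofLex (C j) i

theorem mem_Omat_iff : X ∈ Omat p q ↔ Antitone (cols X) :=
  forall₂_congr fun _ _ => imp_congr_right fun _ => lexGe_iff

theorem mem_Dmat_of_cols_eq_or_eq {Z : Fin p → Fin q → ℝ} (hX : X ∈ Dmat D) (hY : Y ∈ Dmat D)
    (hZ : ∀ j, cols Z j = cols X j ∨ cols Z j = cols Y j) : Z ∈ Dmat D := by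
  intro i j
  rcases hZ j with h | h
  · exact (show Z i j = X i j from congrFun h i) ▸ hX i j
  · exact (show Z i j = Y i j from congrFun h i) ▸ hY i j

theorem ofCols_inf_mem (hX : X ∈ Omat p q ∩ Dmat D) (hY : Y ∈ Omat p q ∩ Dmat D) :
    ofCols (cols X ⊓ cols Y) ∈ Omat p q ∩ Dmat D :=
  ⟨mem_Omat_iff.mpr ((mem_Omat_iff.mp hX.1).inf (mem_Omat_iff.mp hY.1)),
    mem_Dmat_of_cols_eq_or_eq hX.2 hY.2 fun j => min_choice (cols X j) (cols Y j)⟩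

theorem ofCols_sup_mem (hX : X ∈ Omat p q ∩ Dmat D) (hY : Y ∈ Omat p q ∩ Dmat D) :
    ofCols (cols X ⊔ cols Y) ∈ Omat p q ∩ Dmat D :=
  ⟨mem_Omat_iff.mpr ((mem_Omat_iff.mp hX.1).sup (mem_Omat_iff.mp hY.1)),
    mem_Dmat_of_cols_eq_or_eq hX.2 hY.2 fun j => max_choice (cols X j) (cols Y j)⟩

theorem vec_injective : Injective (vec : (Fin p → Fin q → ℝ) → Fin (p * q) → ℝ) := by
  intro X Y h
  funext i j
  simpa [vec] using congrFun h (finProdFinEquiv (i, j))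

/-- Row-major order refines the columnwise order: the first entry where `vec X` and `vec Y` differ
is also the first entry where their columns differ. -/
theorem toLex_vec_le_of_cols_le (h : cols X ≤ cols Y) : toLex (vec X) ≤ toLex (vec Y) := by
  refine le_of_not_gt fun ⟨k, hk, hlt⟩ => ?_
  obtain ⟨⟨i, j⟩, rfl⟩ := finProdFinEquiv.surjective k
  refine (h j).not_gt ⟨i, fun i₀ hi₀ => ?_, ?_⟩
  · simpa [vec] using hk _ (finProdFinEquiv_lt_of_fst_lt j hi₀)
  · simpa [vec] using hlt

theorem strictMono_toLex_vec_ofCols :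
    StrictMono fun C : Fin q → Lex (Fin p → ℝ) => toLex (vec (ofCols C)) :=
  Monotone.strictMono_of_injective (fun _ _ h => toLex_vec_le_of_cols_le h)
    fun _ _ h => congrArg cols (vec_injective (toLex_inj.mp h))

theorem cols_le_of_isLexMin (hX : X ∈ Omat p q ∩ Dmat D) (hY : Y ∈ Omat p q ∩ Dmat D)
    (hmin : ∀ Z ∈ Omat p q ∩ Dmat D, lexGe (vec Z) (vec Y)) : cols Y ≤ cols X :=
  strictMono_toLex_vec_ofCols.le_of_isMinOn_of_inf_mem (S := {C | ofCols C ∈ Omat p q ∩ Dmat D})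
    (isMinOn_iff.mpr fun _ hC => lexGe_iff.mp (hmin _ hC)) (ofCols_inf_mem hX hY)

theorem cols_le_of_isLexMax (hX : X ∈ Omat p q ∩ Dmat D) (hY : Y ∈ Omat p q ∩ Dmat D)
    (hmax : ∀ Z ∈ Omat p q ∩ Dmat D, lexGe (vec Y) (vec Z)) : cols X ≤ cols Y :=
  strictMono_toLex_vec_ofCols.le_of_isMaxOn_of_sup_mem (S := {C | ofCols C ∈ Omat p q ∩ Dmat D})
    (isMaxOn_iff.mpr fun _ hC => lexGe_iff.mp (hmax _ hC)) (ofCols_sup_mem hX hY)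

end Columns

theorem stmt8_general (p q : ℕ) (D : Fin p → Fin q → Set ℝ)
    (Mlo Mhi : Fin p → Fin q → ℝ)
    -- `Mlo` is the lexicographic minimum of `O ∩ 𝒟` (w.r.t. vectorizations)
    (hMlo : Mlo ∈ Omat p q ∩ Dmat D ∧
      ∀ X ∈ Omat p q ∩ Dmat D, lexGe (vec X) (vec Mlo))
    -- `Mhi` is the lexicographic maximum of `O ∩ 𝒟`
    (hMhi : Mhi ∈ Omat p q ∩ Dmat D ∧
      ∀ X ∈ Omat p q ∩ Dmat D, lexGe (vec Mhi) (vec X))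
    -- `iIdx j` is the least `i < p` with `Mlo i j ≠ Mhi i j`, and `p` if none
    (iIdx : Fin q → ℕ)
    (hiIdx : ∀ j : Fin q,
      iIdx j = sInf ({i : ℕ | ∃ h : i < p, Mlo ⟨i, h⟩ j ≠ Mhi ⟨i, h⟩ j} ∪ {p}))
    (i' : Fin p) (j' : Fin q) (hij : (i' : ℕ) ≤ iIdx j') :
    ∀ X ∈ Omat p q ∩ Dmat D, Mlo i' j' ≤ X i' j' ∧ X i' j' ≤ Mhi i' j' := by
  intro X hX
  have hagree : ∀ s < i', Mlo s j' = Mhi s j' := by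
    intro s hs
    by_contra hne
    have : iIdx j' ≤ s := hiIdx j' ▸ Nat.sInf_le (Or.inl ⟨s.isLt, hne⟩)
    exact absurd (hij.trans this) (not_le.mpr hs)
  exact Pi.apply_mem_Icc_of_toLex_le_of_le (x := fun i => X i j') (cols_le_of_isLexMin hX hMlo.1 hMlo.2 j')
    (cols_le_of_isLexMax hX hMhi.1 hMhi.2 j') hagree

theorem stmt8 (p q : ℕ) (D : Fin p → Fin q → Set ℝ)
    (hDfin : ∀ i j, (D i j).Finite) (hDne : ∀ i j, (D i j).Nonempty)
    (hOD : (Omat p q ∩ Dmat D).Nonempty)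
    (Mlo Mhi : Fin p → Fin q → ℝ)
    -- `Mlo` is the lexicographic minimum of `O ∩ 𝒟` (w.r.t. vectorizations)
    (hMlo : Mlo ∈ Omat p q ∩ Dmat D ∧
      ∀ X ∈ Omat p q ∩ Dmat D, lexGe (vec X) (vec Mlo))
    -- `Mhi` is the lexicographic maximum of `O ∩ 𝒟`
    (hMhi : Mhi ∈ Omat p q ∩ Dmat D ∧
      ∀ X ∈ Omat p q ∩ Dmat D, lexGe (vec Mhi) (vec X))
    -- `iIdx j` is the least `i < p` with `Mlo i j ≠ Mhi i j`, and `p` if none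
    (iIdx : Fin q → ℕ)
    (hiIdx : ∀ j : Fin q,
      iIdx j = sInf ({i : ℕ | ∃ h : i < p, Mlo ⟨i, h⟩ j ≠ Mhi ⟨i, h⟩ j} ∪ {p}))
    (Dhat : Fin p → Fin q → Set ℝ)
    (i' : Fin p) (j' : Fin q) (hij : (i' : ℕ) ≤ iIdx j') :
    ∀ X ∈ Omat p q ∩ Dmat D, Mlo i' j' ≤ X i' j' ∧ X i' j' ≤ Mhi i' j' :=
  stmt8_general p q D Mlo Mhi hMlo hMhi iIdx hiIdx i' j' hij
end

section
/- Let X : Fin p → Fin q → ℝ be a matrix. A permutation τ of Fin q acts on matrices by permuting columns: (τ • X) i j = X i (τ⁻¹ j). Then vec(X) ⪰ vec(τ • X) holds for every permutation τ of Fin q if and only if the columns of X are lexicographically non-increasing, i.e., X^j ⪰ X^{j'} for all j ≤ j' in Fin q. -/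
lemma vec_apply {p q : ℕ} (X : Fin p → Fin q → ℝ) (i : Fin p) (j : Fin q) :
    vec X (finProdFinEquiv (i, j)) = X i j := by
  simp [vec]

lemma nat_key {q i i' j j' : ℕ} (hj : j < q) (hi : i < i') :
    j + q * i < j' + q * i' := by
  have h1 : q * (i + 1) ≤ q * i' := Nat.mul_le_mul_left _ hi
  have h2 : q * (i + 1) = q * i + q := by ring
  omega

lemma enc_lt {p q : ℕ} (i i' : Fin p) (j j' : Fin q) :
    finProdFinEquiv (i, j) < finProdFinEquiv (i', j') ↔
      (i < i' ∨ (i = i' ∧ j < j')) := by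
  have hval : ∀ (a : Fin p) (b : Fin q),
      ((finProdFinEquiv (a, b) : Fin (p * q)) : ℕ) = (b : ℕ) + q * a := by
    intro a b; rfl
  rw [Fin.lt_def, hval, hval]
  constructor
  · intro h
    rcases lt_trichotomy i i' with hi | hi | hi
    · exact Or.inl hi
    · refine Or.inr ⟨hi, ?_⟩
      rw [Fin.lt_def]
      have h2 : q * (i : ℕ) = q * (i' : ℕ) := by rw [hi]
      omega
    · have := nat_key (i := (i' : ℕ)) (i' := (i : ℕ)) (j' := (j : ℕ)) j'.isLt (Fin.lt_def.mp hi)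
      omega
  · rintro (hi | ⟨rfl, hj⟩)
    · exact nat_key j.isLt (Fin.lt_def.mp hi)
    · have : (j : ℕ) < (j' : ℕ) := Fin.lt_def.mp hj
      omega

/-- For the row-wise variable ordering, `vec X ⪰ vec (τ • X)` holds for all
column permutations `τ` if and only if the columns of `X` are
lexicographically non-increasing. -/
theorem stmt15 (p q : ℕ) (X : Fin p → Fin q → ℝ) :
    (∀ τ : Equiv.Perm (Fin q),
        lexGe (vec X) (vec fun i j => X i (τ⁻¹ j))) ↔
      ∀ j j' : Fin q, j ≤ j' → lexGe (fun i => X i j) (fun i => X i j') := by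
  constructor
  · -- ⇒ : use the transposition (j j')
    intro h j j' hjj'
    rcases eq_or_lt_of_le hjj' with rfl | hlt
    · exact Or.inl rfl
    have hmain := h (Equiv.swap j j')
    have hswapinv : (Equiv.swap j j')⁻¹ = Equiv.swap j j' := Equiv.swap_inv j j'
    rw [hswapinv] at hmain
    set Y : Fin p → Fin q → ℝ := fun i l => X i (Equiv.swap j j' l) with hY
    rcases hmain with heq | ⟨k, hpre, hk⟩
    · left
      funext i
      have := congrFun heq (finProdFinEquiv (i, j))
      rw [vec_apply, vec_apply] at this
      simpa [hY] using this
    · obtain ⟨⟨i₀, l₀⟩, rfl⟩ : ∃ pr : Fin p × Fin q, finProdFinEquiv pr = k :=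
        ⟨finProdFinEquiv.symm k, Equiv.apply_symm_apply _ _⟩
      rw [vec_apply, vec_apply] at hk
      have hl₀ : l₀ = j ∨ l₀ = j' := by
        by_contra hc
        push_neg at hc
        have : Equiv.swap j j' l₀ = l₀ := Equiv.swap_apply_of_ne_of_ne hc.1 hc.2
        rw [hY] at hk
        simp only [this] at hk
        exact lt_irrefl _ hk
      rcases hl₀ with rfl | rfl
      · -- first difference in column j (here called l₀): X i₀ j' < X i₀ j
        right
        refine ⟨i₀, ?_, ?_⟩
        · intro i hi
          have := hpre (finProdFinEquiv (i, l₀)) ((enc_lt i i₀ l₀ l₀).mpr (Or.inl hi))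
          rw [vec_apply, vec_apply] at this
          simpa [hY] using this
        · simpa [hY] using hk
      · -- first difference in column j': impossible
        exfalso
        have := hpre (finProdFinEquiv (i₀, j)) ((enc_lt i₀ i₀ j l₀).mpr (Or.inr ⟨rfl, hlt⟩))
        rw [vec_apply, vec_apply] at this
        simp only [hY, Equiv.swap_apply_left] at this
        simp only [hY, Equiv.swap_apply_right] at hk
        linarith
  · -- ⇐ : columns sorted implies ⪰ for every permutation
    intro h τ
    set σ : Equiv.Perm (Fin q) := τ⁻¹ with hσ
    set Y : Fin p → Fin q → ℝ := fun i l => X i (σ l) with hY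
    by_cases heq : vec X = vec Y
    · exact Or.inl heq
    right
    have hD : (Finset.univ.filter (fun k : Fin (p * q) => vec X k ≠ vec Y k)).Nonempty := by
      by_contra hc
      rw [Finset.not_nonempty_iff_eq_empty] at hc
      apply heq
      funext k
      by_contra hk
      have : k ∈ Finset.univ.filter (fun k : Fin (p * q) => vec X k ≠ vec Y k) := by
        simp [hk]
      rw [hc] at this
      exact absurd this (Finset.notMem_empty k)
    set k₀ := (Finset.univ.filter (fun k : Fin (p * q) => vec X k ≠ vec Y k)).min' hD with hk₀
    have hk₀mem : vec X k₀ ≠ vec Y k₀ := by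
      have := Finset.min'_mem _ hD
      rw [← hk₀] at this
      simpa using this
    have hpre : ∀ m : Fin (p * q), m < k₀ → vec X m = vec Y m := by
      intro m hm
      by_contra hc
      have : m ∈ Finset.univ.filter (fun k : Fin (p * q) => vec X k ≠ vec Y k) := by simp [hc]
      exact absurd (Finset.min'_le _ _ this) (not_le.mpr hm)
    obtain ⟨⟨i₀, j₀⟩, hk⟩ : ∃ pr : Fin p × Fin q, finProdFinEquiv pr = k₀ :=
      ⟨finProdFinEquiv.symm k₀, Equiv.apply_symm_apply _ _⟩
    refine ⟨k₀, hpre, ?_⟩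
    rw [← hk, vec_apply, vec_apply]
    rw [← hk, vec_apply, vec_apply] at hk₀mem
    -- Facts about earlier positions
    have F1 : ∀ (i : Fin p), i < i₀ → ∀ l, X i l = X i (σ l) := by
      intro i hi l
      have := hpre (finProdFinEquiv (i, l)) (by rw [← hk]; exact (enc_lt i i₀ l j₀).mpr (Or.inl hi))
      rw [vec_apply, vec_apply] at this
      exact this
    have F2 : ∀ l : Fin q, l < j₀ → X i₀ l = X i₀ (σ l) := by
      intro l hl
      have := hpre (finProdFinEquiv (i₀, l))
        (by rw [← hk]; exact (enc_lt i₀ i₀ l j₀).mpr (Or.inr ⟨rfl, hl⟩))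
      rw [vec_apply, vec_apply] at this
      exact this
    have hYv : Y i₀ j₀ = X i₀ (σ j₀) := rfl
    rw [hYv] at hk₀mem ⊢
    by_contra hc
    push_neg at hc
    have ht : X i₀ j₀ < X i₀ (σ j₀) := lt_of_le_of_ne hc hk₀mem
    -- the bad set
    set A : Finset (Fin q) :=
      Finset.univ.filter (fun l => (∀ i : Fin p, i < i₀ → X i l = X i j₀) ∧ X i₀ j₀ < X i₀ l)
      with hA
    have hAlt : ∀ l ∈ A, l < j₀ := by
      intro l hl
      rw [hA, Finset.mem_filter] at hl
      obtain ⟨-, hpref, hval⟩ := hl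
      by_contra hge
      push_neg at hge
      rcases h j₀ l hge with heq' | ⟨m, hm, hmv⟩
      · have h3 : X i₀ j₀ = X i₀ l := by simpa using congrFun heq' i₀
        linarith
      · have hmv' : X m l < X m j₀ := hmv
        rcases lt_trichotomy m i₀ with hmi | hmi | hmi
        · have h4 : X m l = X m j₀ := hpref m hmi
          linarith
        · subst hmi; linarith
        · have h5 : X i₀ j₀ = X i₀ l := by simpa using hm i₀ hmi
          linarith
    have hmaps : ∀ l ∈ A, σ l ∈ A := by
      intro l hl
      have hllt := hAlt l hl
      rw [hA, Finset.mem_filter] at hl ⊢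
      obtain ⟨-, hpref, hval⟩ := hl
      refine ⟨Finset.mem_univ _, ?_, ?_⟩
      · intro i hi
        rw [← F1 i hi l]
        exact hpref i hi
      · rw [← F2 l hllt]
        exact hval
    have hj₀A : σ j₀ ∈ A := by
      rw [hA, Finset.mem_filter]
      refine ⟨Finset.mem_univ _, ?_, ht⟩
      intro i hi
      exact (F1 i hi j₀).symm
    have himg : A.image σ = A := by
      apply Finset.eq_of_subset_of_card_le
      · intro x hx
        rw [Finset.mem_image] at hx
        obtain ⟨l, hl, rfl⟩ := hx
        exact hmaps l hl
      · rw [Finset.card_image_of_injective _ σ.injective]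
    have : j₀ ∈ A := by
      rw [← himg, Finset.mem_image] at hj₀A
      obtain ⟨l, hl, hle⟩ := hj₀A
      rwa [σ.injective hle] at hl
    exact lt_irrefl j₀ (hAlt j₀ this)
end
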